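/- arXiv:2510.07526 — 2 statements merged into one kernel-verified Lean document; each statement's English description precedes it below -/
import Mathlib

section
/- Let A be a real symmetric n×n matrix with a one-dimensional kernel spanned by r, satisfying the definiteness condition: for all complex vectors v, v* A v = 0 implies v ∈ ℂ·r. Let B be a real symmetric positive-definite n×n matrix. Then all eigenvalues of B⁻¹A are real, and 0 is an eigenvalue of B⁻¹A with geometric multiplicity one. -/
open Matrix

private lemma bpos_complex {n : ℕ} {B : Matrix (Fin n) (Fin n) ℝ} (hBpos : B.PosDef)
    (v : Fin n → ℂ) (hv : v ≠ 0) :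
    0 < (star v ⬝ᵥ (B.map Complex.ofReal) *ᵥ v).re := by
  set x : Fin n → ℝ := fun i => (v i).re with hx
  set y : Fin n → ℝ := fun i => (v i).im with hy
  have hre : (star v ⬝ᵥ (B.map Complex.ofReal) *ᵥ v).re
      = x ⬝ᵥ B *ᵥ x + y ⬝ᵥ B *ᵥ y := by
    simp only [dotProduct, mulVec, Matrix.map_apply, Pi.star_apply, Complex.star_def,
      Finset.mul_sum, Complex.re_sum, Complex.mul_re, Complex.mul_im,
      Complex.conj_re, Complex.conj_im, Complex.ofReal_re, Complex.ofReal_im]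
    rw [← Finset.sum_add_distrib]
    refine Finset.sum_congr rfl fun i _ => ?_
    rw [← Finset.sum_add_distrib]
    refine Finset.sum_congr rfl fun j _ => ?_
    simp only [hx, hy]
    ring
  rw [hre]
  have hxy : x ≠ 0 ∨ y ≠ 0 := by
    by_contra h
    push_neg at h
    exact hv (funext fun i => Complex.ext (congrFun h.1 i) (congrFun h.2 i))
  rcases hxy with h | h
  · have h1 := hBpos.dotProduct_mulVec_pos h
    have h2 := hBpos.posSemidef.dotProduct_mulVec_nonneg y
    simp only [star_trivial] at h1 h2
    linarith
  · have h1 := hBpos.posSemidef.dotProduct_mulVec_nonneg x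
    have h2 := hBpos.dotProduct_mulVec_pos h
    simp only [star_trivial] at h1 h2
    linarith

private lemma herm_dot_real {n : ℕ} {M : Matrix (Fin n) (Fin n) ℂ} (hM : M.IsHermitian)
    (v : Fin n → ℂ) : star (star v ⬝ᵥ M *ᵥ v) = star v ⬝ᵥ M *ᵥ v := by
  calc star (star v ⬝ᵥ M *ᵥ v) = star (M *ᵥ v) ⬝ᵥ star (star v) :=
        (star_dotProduct_star _ _).symm
    _ = (star v ᵥ* Mᴴ) ⬝ᵥ v := by rw [star_mulVec, star_star]
    _ = star v ⬝ᵥ Mᴴ *ᵥ v := (dotProduct_mulVec _ _ _).symm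
    _ = star v ⬝ᵥ M *ᵥ v := by rw [hM.eq]


/-- for `A` real symmetric with one-dimensional kernel spanned by `r` and
complex quadratic form vanishing only on `ℂ·r`, and `B` real symmetric positive definite,
all eigenvalues of `B⁻¹A` are real, and `0` is an eigenvalue of `B⁻¹A` of geometric
multiplicity one. -/
theorem stmt_5 {n : ℕ} (A B : Matrix (Fin n) (Fin n) ℝ) (r : Fin n → ℝ)
    (hAsymm : A.IsSymm) (hr : r ≠ 0)
    (hker : LinearMap.ker A.mulVecLin = Submodule.span ℝ {r})
    (hquad : ∀ v : Fin n → ℂ,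
      (∑ i, ∑ j, (starRingEnd ℂ) (v i) * (A i j : ℂ) * v j) = 0 →
      ∃ c : ℂ, v = c • fun i => (r i : ℂ))
    (hBsymm : B.IsSymm) (hBpos : B.PosDef) :
    (∀ μ : ℂ, ((B⁻¹ * A).map (Complex.ofReal) - μ • 1).det = 0 → μ.im = 0) ∧
    Module.finrank ℝ (LinearMap.ker (B⁻¹ * A).mulVecLin) = 1 := by
  have hBdet : IsUnit B.det := isUnit_iff_ne_zero.mpr hBpos.det_pos.ne'
  have hBB : B * B⁻¹ = 1 := mul_nonsing_inv B hBdet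
  constructor
  · intro μ hdet
    obtain ⟨v, hv, hMv⟩ := (Matrix.exists_mulVec_eq_zero_iff).mpr hdet
    have hMv' : ((B⁻¹ * A).map Complex.ofReal) *ᵥ v = μ • v := by
      have : ((B⁻¹ * A).map Complex.ofReal) *ᵥ v - μ • v = 0 := by
        rw [← hMv, sub_mulVec, smul_mulVec, one_mulVec]
      exact sub_eq_zero.mp this
    -- pass to the generalized eigenproblem A v = μ B v over ℂ
    have hAB : (B.map Complex.ofReal) * ((B⁻¹ * A).map Complex.ofReal)
        = A.map Complex.ofReal := by
      rw [show (Complex.ofReal : ℝ → ℂ) = ⇑Complex.ofRealHom from rfl,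
        ← Matrix.map_mul, ← mul_assoc, hBB, one_mul]
    have hAv : (A.map Complex.ofReal) *ᵥ v = μ • ((B.map Complex.ofReal) *ᵥ v) := by
      rw [← hAB, ← mulVec_mulVec, hMv', mulVec_smul]
    set p := star v ⬝ᵥ (B.map Complex.ofReal) *ᵥ v with hp
    set q := star v ⬝ᵥ (A.map Complex.ofReal) *ᵥ v with hq
    have hAherm : (A.map Complex.ofReal).IsHermitian := by
      have : A.IsHermitian := hAsymm
      exact this.map Complex.ofReal (fun a => (Complex.conj_ofReal a).symm)
    have hBherm : (B.map Complex.ofReal).IsHermitian := by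
      have : B.IsHermitian := hBsymm
      exact this.map Complex.ofReal (fun a => (Complex.conj_ofReal a).symm)
    have hqp : q = μ * p := by
      rw [hq, hAv, dotProduct_smul, hp, smul_eq_mul]
    have hqstar : star q = q := herm_dot_real hAherm v
    have hpstar : star p = p := herm_dot_real hBherm v
    have hppos : 0 < p.re := bpos_complex hBpos v hv
    have hpne : p ≠ 0 := fun h => by simp [h] at hppos
    have : (starRingEnd ℂ) μ * p = μ * p := by
      calc (starRingEnd ℂ) μ * p = star μ * star p := by rw [hpstar]; rfl
        _ = star (μ * p) := (star_mul' μ p).symm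
        _ = star q := by rw [hqp]
        _ = q := hqstar
        _ = μ * p := hqp
    have hμ : (starRingEnd ℂ) μ = μ := mul_right_cancel₀ hpne this
    exact Complex.conj_eq_iff_im.mp hμ
  · have hk : LinearMap.ker (B⁻¹ * A).mulVecLin = LinearMap.ker A.mulVecLin := by
      ext w
      simp only [LinearMap.mem_ker, mulVecLin_apply, ← mulVec_mulVec]
      constructor
      · intro h
        have h2 : B *ᵥ (B⁻¹ *ᵥ (A *ᵥ w)) = 0 := by rw [h, mulVec_zero]
        rwa [mulVec_mulVec, hBB, one_mulVec] at h2
      · intro h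
        rw [h, mulVec_zero]
    rw [hk, hker]
    exact finrank_span_singleton hr
end

section
/- Let A be a real symmetric n×n matrix with v* A v = 0 (for v ∈ ℂⁿ) only when v is a multiple of a fixed real vector r spanning ker A. Then A is (positive or negative) semidefinite: either v* A v ≥ 0 for all v or v* A v ≤ 0 for all v, with equality exactly on ℂ·r. -/
open Matrix

private lemma dot_symm {n : ℕ} (A : Matrix (Fin n) (Fin n) ℝ) (hA : A.IsSymm)
    (v w : Fin n → ℝ) : v ⬝ᵥ A.mulVec w = w ⬝ᵥ A.mulVec v := by
  rw [dotProduct_mulVec, ← hA, vecMul_transpose, dotProduct_comm, hA]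

private lemma expand {n : ℕ} (A : Matrix (Fin n) (Fin n) ℝ) (v w : Fin n → ℝ) (t : ℝ) :
    (v + t • w) ⬝ᵥ A.mulVec (v + t • w)
      = v ⬝ᵥ A.mulVec v + t * (v ⬝ᵥ A.mulVec w) + t * (w ⬝ᵥ A.mulVec v)
        + t^2 * (w ⬝ᵥ A.mulVec w) := by
  simp [mulVec_add, mulVec_smul, dotProduct_add, add_dotProduct, smul_dotProduct,
    dotProduct_smul, smul_eq_mul]
  ring

private lemma quad_root (a b c0 : ℝ) (ha : a < 0) (hc : 0 < c0) :
    ∃ t : ℝ, c0 + t * b + t * b + t ^ 2 * a = 0 := by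
  have hdisc : 0 ≤ b ^ 2 - a * c0 := by nlinarith
  have hs : Real.sqrt (b ^ 2 - a * c0) ^ 2 = b ^ 2 - a * c0 := Real.sq_sqrt hdisc
  have hane : a ≠ 0 := ha.ne
  refine ⟨(-b + Real.sqrt (b ^ 2 - a * c0)) / a, ?_⟩
  field_simp
  have hs2 : Real.sqrt (b ^ 2 - c0 * a) ^ 2 = b ^ 2 - c0 * a := by rw [mul_comm c0 a]; exact hs
  nlinarith [hs2]

/-- a real symmetric matrix `A` with `A r = 0`, `r ≠ 0`, whose complex
quadratic form `v* A v` vanishes only on multiples of `r`, is semidefinite (of one sign),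
with equality in the quadratic form exactly on the line through `r`. -/
theorem stmt_6 {n : ℕ} (A : Matrix (Fin n) (Fin n) ℝ) (r : Fin n → ℝ)
    (hAsymm : A.IsSymm) (hr : r ≠ 0) (hAr : A.mulVec r = 0)
    (hquad : ∀ v : Fin n → ℂ,
      (∑ i, ∑ j, (starRingEnd ℂ) (v i) * (A i j : ℂ) * v j) = 0 →
      ∃ c : ℂ, v = c • fun i => (r i : ℂ)) :
    ((∀ v : Fin n → ℝ, 0 ≤ v ⬝ᵥ A.mulVec v) ∨ (∀ v : Fin n → ℝ, v ⬝ᵥ A.mulVec v ≤ 0)) ∧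
    (∀ v : Fin n → ℝ, v ⬝ᵥ A.mulVec v = 0 ↔ ∃ c : ℝ, v = c • r) := by
  obtain ⟨i0, hi0⟩ : ∃ i, r i ≠ 0 := by
    by_contra h
    push_neg at h
    exact hr (funext fun i => h i)
  have hzero : ∀ v : Fin n → ℝ, v ⬝ᵥ A.mulVec v = 0 → ∃ c : ℝ, v = c • r := by
    intro v hv
    obtain ⟨c, hc⟩ := hquad (fun i => (v i : ℂ)) (by
      have : (∑ i, ∑ j, (starRingEnd ℂ) ((v i : ℂ)) * (A i j : ℂ) * (v j : ℂ))
          = ((v ⬝ᵥ A.mulVec v : ℝ) : ℂ) := by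
        simp [dotProduct, mulVec, Finset.mul_sum, Complex.conj_ofReal, mul_assoc]
      rw [this, hv, Complex.ofReal_zero])
    have hci : (v i0 : ℂ) = c * (r i0 : ℂ) := by
      have := congrFun hc i0
      simpa using this
    have hrne : (r i0 : ℂ) ≠ 0 := Complex.ofReal_ne_zero.mpr hi0
    have hcre : c = (c.re : ℂ) := by
      have h2 : c = (v i0 : ℂ) / (r i0 : ℂ) := by
        rw [eq_div_iff hrne]
        linear_combination -hci
      rw [h2]
      norm_num [Complex.ext_iff, Complex.div_re, Complex.div_im, Complex.normSq]
      field_simp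
    refine ⟨c.re, funext fun j => ?_⟩
    have := congrFun hc j
    simp only [Pi.smul_apply, smul_eq_mul] at this ⊢
    rw [hcre] at this
    exact_mod_cast this
  have hmem : ∀ v : Fin n → ℝ, (∃ c : ℝ, v = c • r) → v ⬝ᵥ A.mulVec v = 0 := by
    rintro v ⟨c, rfl⟩
    simp [mulVec_smul, hAr]
  refine ⟨?_, fun v => ⟨hzero v, hmem v⟩⟩
  by_contra h
  push_neg at h
  obtain ⟨⟨v, hv⟩, ⟨w, hw⟩⟩ := h
  have hba : v ⬝ᵥ A.mulVec w = w ⬝ᵥ A.mulVec v := dot_symm A hAsymm v w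
  obtain ⟨t0, ht0⟩ := quad_root (v ⬝ᵥ A.mulVec v) (w ⬝ᵥ A.mulVec v) (w ⬝ᵥ A.mulVec w) hv hw
  have hroot : (w + t0 • v) ⬝ᵥ A.mulVec (w + t0 • v) = 0 := by
    rw [expand, hba]
    linarith [ht0]
  obtain ⟨c, hc⟩ := hzero _ hroot
  have hrw : w = c • r + (-t0) • v := by
    rw [← hc]; module
  have hkey : w ⬝ᵥ A.mulVec w = t0 ^ 2 * (v ⬝ᵥ A.mulVec v) := by
    conv_lhs => rw [hrw]
    rw [expand]
    have h1 : (c • r) ⬝ᵥ A.mulVec (c • r) = 0 := by simp [mulVec_smul, hAr]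
    have h2 : (c • r) ⬝ᵥ A.mulVec v = 0 := by
      rw [dot_symm A hAsymm]; simp [mulVec_smul, hAr]
    have h3 : v ⬝ᵥ A.mulVec (c • r) = 0 := by simp [mulVec_smul, hAr]
    rw [h1, h2, h3]
    ring
  nlinarith [sq_nonneg t0]
end
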